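/- Let p be a discrete probability measure p = Σᵢ aᵢ δ_{xᵢ} on ℝ^d with support Ω = {x₁,…,x_N}. For x ∈ ℝ^d, let NN_Ω(x) be the set of nearest points of Ω to x, p̂_{NN(x)} the normalized restriction of p to NN_Ω(x), and Δ_Ω(x) = d_Ω(x;2)² - d_Ω(x;1)² the gap between the squares of the second-smallest and smallest distance values from x to Ω. Then d_{W,2}(p(·|X_σ = x), p̂_{NN(x)}) ≤ diam(Ω) · √((1 - p(NN_Ω(x)))/p(NN_Ω(x))) · exp(-Δ_Ω(x)/(4σ²)). -/

import Mathlib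

open MeasureTheory Metric
open scoped ENNReal

/-- The `s`-Wasserstein distance (valued in `[0,∞]`), defined as the infimum over all
couplings `π` of `μ` and `ν` of the `L^s(π)`-norm of `(x, y) ↦ x - y`. -/
noncomputable def wassersteinDist {E : Type*} [MeasurableSpace E] [NormedAddCommGroup E]
    (s : ℝ≥0∞) (μ ν : Measure E) : ℝ≥0∞ :=
  ⨅ π ∈ {π : Measure (E × E) | π.map Prod.fst = μ ∧ π.map Prod.snd = ν},
    eLpNorm (fun z : E × E => z.1 - z.2) s π

/-- The posterior measure `p(· | X_σ = x)` for the discrete measure `p = Σᵢ aᵢ δ_{xᵢ}`: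
the point `xᵢ` gets weight `aᵢ e^{-‖xᵢ-x‖²/(2σ²)} / Σⱼ aⱼ e^{-‖xⱼ-x‖²/(2σ²)}`. -/
noncomputable def discretePosterior {d N : ℕ} (pts : Fin N → EuclideanSpace ℝ (Fin d))
    (a : Fin N → ℝ) (σ : ℝ) (x : EuclideanSpace ℝ (Fin d)) :
    Measure (EuclideanSpace ℝ (Fin d)) :=
  ∑ i : Fin N,
    ENNReal.ofReal
        (a i * Real.exp (-dist x (pts i) ^ 2 / (2 * σ ^ 2)) /
          ∑ j : Fin N, a j * Real.exp (-dist x (pts j) ^ 2 / (2 * σ ^ 2))) •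
      Measure.dirac (pts i)

open Classical in
/-- The set `NN_Ω(x)` of indices of nearest points of `Ω = {x₁, …, x_N}` to `x`. -/
noncomputable def nearestIdx {d N : ℕ} (pts : Fin N → EuclideanSpace ℝ (Fin d))
    (x : EuclideanSpace ℝ (Fin d)) : Finset (Fin N) :=
  Finset.univ.filter fun i => ∀ j, dist x (pts i) ≤ dist x (pts j)

/-- The measure `p̂_{NN(x)}`: the normalized restriction of `p = Σᵢ aᵢ δ_{xᵢ}` to the
nearest points of `Ω` to `x`. -/
noncomputable def nnMeasure {d N : ℕ} (pts : Fin N → EuclideanSpace ℝ (Fin d))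
    (a : Fin N → ℝ) (x : EuclideanSpace ℝ (Fin d)) :
    Measure (EuclideanSpace ℝ (Fin d)) :=
  ∑ i ∈ nearestIdx pts x,
    ENNReal.ofReal (a i / ∑ j ∈ nearestIdx pts x, a j) • Measure.dirac (pts i)

/-- The smallest distance value `d_Ω(x; 1)` from `x` to the set `Ω = {x₁, …, x_N}`. -/
noncomputable def firstDist {d N : ℕ} (pts : Fin N → EuclideanSpace ℝ (Fin d))
    (x : EuclideanSpace ℝ (Fin d)) : ℝ :=
  sInf (Set.range fun i => dist x (pts i))

open Classical in
/-- The gap `Δ_Ω(x) = d_Ω(x;2)² - d_Ω(x;1)²` between the squares of the two smallest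
distance *values* from `x` to `Ω` (`0` if all distance values coincide). -/
noncomputable def distGapSq {d N : ℕ} (pts : Fin N → EuclideanSpace ℝ (Fin d))
    (x : EuclideanSpace ℝ (Fin d)) : ℝ :=
  if ∃ i, firstDist pts x < dist x (pts i) then
    sInf {r | (∃ i, dist x (pts i) = r) ∧ firstDist pts x < r} ^ 2 - firstDist pts x ^ 2
  else 0


section Aux
open MeasureTheory
open scoped ENNReal

variable {α β ι : Type*} [MeasurableSpace α] [MeasurableSpace β]

lemma map_sum_smul_dirac (s : Finset ι) (c : ι → ℝ≥0∞) (g : ι → α) {f : α → β}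
    (hf : Measurable f) :
    (∑ i ∈ s, c i • Measure.dirac (g i)).map f = ∑ i ∈ s, c i • Measure.dirac (f (g i)) := by
  classical
  induction s using Finset.induction with
  | empty => simp
  | insert _ _ h ih =>
    rw [Finset.sum_insert h, Measure.map_add _ _ hf, Measure.map_smul,
      Measure.map_dirac' hf, ih, Finset.sum_insert h]

lemma lintegral_sum_smul_dirac [MeasurableSingletonClass α] (s : Finset ι) (c : ι → ℝ≥0∞)
    (g : ι → α) (F : α → ℝ≥0∞) :
    ∫⁻ z, F z ∂(∑ i ∈ s, c i • Measure.dirac (g i)) = ∑ i ∈ s, c i * F (g i) := by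
  rw [lintegral_finset_sum_measure]
  simp [lintegral_smul_measure, lintegral_dirac]

lemma sqrt_exp' (y : ℝ) : Real.sqrt (Real.exp y) = Real.exp (y / 2) := by
  rw [Real.sqrt_eq_iff_eq_sq] <;> [skip; positivity; positivity]
  rw [← Real.exp_nat_mul]; norm_num; ring_nf

end Aux

set_option maxHeartbeats 1000000 in
/-- For the discrete probability measure `p = Σᵢ aᵢ δ_{xᵢ}` with support
`Ω = {x₁, …, x_N}`, the posterior `p(· | X_σ = x)` satisfies
`d_{W,2}(p(·|X_σ=x), p̂_{NN(x)}) ≤ diam(Ω) √((1 - p(NN_Ω(x)))/p(NN_Ω(x))) e^{-Δ_Ω(x)/(4σ²)}`. -/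
theorem stmt12 {d N : ℕ} (hN : 0 < N) (pts : Fin N → EuclideanSpace ℝ (Fin d))
    (hinj : Function.Injective pts)
    (a : Fin N → ℝ) (ha : ∀ i, 0 < a i) (hsum : ∑ i, a i = 1)
    (σ : ℝ) (hσ : 0 < σ) (x : EuclideanSpace ℝ (Fin d)) :
    wassersteinDist 2 (discretePosterior pts a σ x) (nnMeasure pts a x) ≤
      ENNReal.ofReal (Metric.diam (Set.range pts) *
        Real.sqrt ((1 - ∑ i ∈ nearestIdx pts x, a i) / ∑ i ∈ nearestIdx pts x, a i) *
        Real.exp (-distGapSq pts x / (4 * σ ^ 2))) := by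
  classical
  set e : Fin N → ℝ := fun i => Real.exp (-dist x (pts i) ^ 2 / (2 * σ ^ 2)) with he
  set S : ℝ := ∑ j, a j * e j with hSdef
  have hepos : ∀ i, 0 < e i := fun i => Real.exp_pos _
  have huniv : (Finset.univ : Finset (Fin N)).Nonempty := ⟨⟨0, hN⟩, Finset.mem_univ _⟩
  have hS : 0 < S := Finset.sum_pos (fun j _ => mul_pos (ha j) (hepos j)) huniv
  set w : Fin N → ℝ := fun i => a i * e i / S with hw
  have hw0 : ∀ i, 0 < w i := fun i => div_pos (mul_pos (ha i) (hepos i)) hS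
  have hwsum : ∑ i, w i = 1 := by
    rw [hw, ← Finset.sum_div, ← hSdef, div_self hS.ne']
  set NN := nearestIdx pts x with hNNdef
  have hmemNN : ∀ i, i ∈ NN ↔ ∀ j, dist x (pts i) ≤ dist x (pts j) := by
    intro i; simp [hNNdef, nearestIdx]
  obtain ⟨i₀, -, hi₀⟩ := Finset.exists_min_image Finset.univ (fun i => dist x (pts i)) huniv
  have hi₀NN : i₀ ∈ NN := (hmemNN i₀).2 fun j => hi₀ j (Finset.mem_univ _)
  set d₁ := firstDist pts x with hd₁def
  have hbdd : BddBelow (Set.range fun i => dist x (pts i)) := (Set.finite_range _).bddBelow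
  have hd₁le : ∀ j, d₁ ≤ dist x (pts j) := fun j => csInf_le hbdd ⟨j, rfl⟩
  have hd₁eq : ∀ i ∈ NN, dist x (pts i) = d₁ := by
    intro i hi
    exact le_antisymm (le_csInf ⟨_, ⟨i₀, rfl⟩⟩ (by rintro b ⟨j, rfl⟩; exact (hmemNN i).1 hi j))
      (csInf_le hbdd ⟨i, rfl⟩)
  have hd₁0 : 0 ≤ d₁ := (hd₁eq i₀ hi₀NN) ▸ dist_nonneg
  set P : ℝ := ∑ i ∈ NN, a i with hPdef
  have hP0 : 0 < P := Finset.sum_pos (fun i _ => ha i) ⟨i₀, hi₀NN⟩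
  set e₁ : ℝ := Real.exp (-d₁ ^ 2 / (2 * σ ^ 2)) with he₁
  have heNN : ∀ i ∈ NN, e i = e₁ := by
    intro i hi; rw [he, he₁]; simp only []
    rw [hd₁eq i hi]
  have hPe₁S : P * e₁ ≤ S := by
    have h2 : ∑ i ∈ NN, a i * e i = P * e₁ := by
      rw [hPdef, Finset.sum_mul]
      exact Finset.sum_congr rfl fun i hi => by rw [heNN i hi]
    rw [← h2, hSdef]
    exact Finset.sum_le_sum_of_subset_of_nonneg (Finset.subset_univ _)
      fun i _ _ => (mul_pos (ha i) (hepos i)).le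
  set v : Fin N → ℝ := fun i => a i / P with hv
  have hμ : discretePosterior pts a σ x = ∑ i, ENNReal.ofReal (w i) • Measure.dirac (pts i) := rfl
  have hν : nnMeasure pts a x = ∑ i ∈ NN, ENNReal.ofReal (v i) • Measure.dirac (pts i) := rfl
  have hwv : ∀ k ∈ NN, w k ≤ v k := by
    intro k hk
    rw [hw, hv]; simp only []
    rw [heNN k hk, div_le_div_iff₀ hS hP0]
    nlinarith [hPe₁S, (ha k).le]
  have key : ∀ (π : Measure (EuclideanSpace ℝ (Fin d) × EuclideanSpace ℝ (Fin d))), π.map Prod.fst = discretePosterior pts a σ x →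
      π.map Prod.snd = nnMeasure pts a x →
      wassersteinDist 2 (discretePosterior pts a σ x) (nnMeasure pts a x) ≤
        eLpNorm (fun z : EuclideanSpace ℝ (Fin d) × EuclideanSpace ℝ (Fin d) => z.1 - z.2) 2 π := by
    intro π h1 h2
    unfold wassersteinDist
    exact iInf₂_le π ⟨h1, h2⟩
  by_cases hU : NN = Finset.univ
  · -- all points are nearest: the two measures coincide
    have hP1 : P = 1 := by rw [hPdef, hU]; exact hsum
    have hSe₁ : S = e₁ := by
      rw [hSdef, ← hU]
      calc ∑ j ∈ NN, a j * e j = ∑ j ∈ NN, a j * e₁ :=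
            Finset.sum_congr rfl fun j hj => by rw [heNN j hj]
        _ = P * e₁ := by rw [hPdef, Finset.sum_mul]
        _ = e₁ := by rw [hP1, one_mul]
    have he₁pos : (0:ℝ) < e₁ := Real.exp_pos _
    have hwa : ∀ i, w i = v i := by
      intro i; rw [hw, hv]; simp only []
      rw [hP1, heNN i (by rw [hU]; exact Finset.mem_univ i), hSe₁, div_one,
        mul_div_assoc, div_self he₁pos.ne', mul_one]
    set π : Measure (EuclideanSpace ℝ (Fin d) × EuclideanSpace ℝ (Fin d)) := ∑ i, ENNReal.ofReal (w i) • Measure.dirac (pts i, pts i) with hπ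
    have hfst : π.map Prod.fst = discretePosterior pts a σ x := by
      rw [hπ, map_sum_smul_dirac _ _ _ measurable_fst, hμ]
    have hsnd : π.map Prod.snd = nnMeasure pts a x := by
      rw [hπ, map_sum_smul_dirac _ _ _ measurable_snd, hν, hU]
      exact Finset.sum_congr rfl fun i _ => by rw [hwa i]
    have h0 : eLpNorm (fun z : EuclideanSpace ℝ (Fin d) × EuclideanSpace ℝ (Fin d) => z.1 - z.2) 2 π = 0 := by
      rw [eLpNorm_eq_lintegral_rpow_enorm_toReal two_ne_zero ENNReal.ofNat_ne_top, hπ,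
        lintegral_sum_smul_dirac]
      simp
    calc wassersteinDist 2 (discretePosterior pts a σ x) (nnMeasure pts a x)
        ≤ eLpNorm (fun z : EuclideanSpace ℝ (Fin d) × EuclideanSpace ℝ (Fin d) => z.1 - z.2) 2 π :=
          key π hfst hsnd
      _ = 0 := h0
      _ ≤ _ := zero_le'
  · -- main case
    have hNNc : NNᶜ.Nonempty := by
      rw [Finset.nonempty_iff_ne_empty]
      simpa [Finset.compl_eq_empty_iff] using hU
    set t : ℝ := ∑ j ∈ NNᶜ, w j with ht
    have ht0 : 0 < t := Finset.sum_pos (fun j _ => hw0 j) hNNc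
    have hP1 : P + ∑ j ∈ NNᶜ, a j = 1 := by
      rw [hPdef, Finset.sum_add_sum_compl]; exact hsum
    have hwNN : ∑ k ∈ NN, w k = 1 - t := by
      have := Finset.sum_add_sum_compl NN w
      rw [hwsum] at this; linarith [this]
    have hvNN : ∑ k ∈ NN, v k = 1 := by
      rw [hv, ← Finset.sum_div, ← hPdef, div_self hP0.ne']
    set u : Fin N → ℝ := fun k => v k - w k with hu
    have hu0 : ∀ k ∈ NN, 0 ≤ u k := fun k hk => sub_nonneg.2 (hwv k hk)
    have husum : ∑ k ∈ NN, u k = t := by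
      rw [hu]; rw [Finset.sum_sub_distrib, hvNN, hwNN]; ring
    -- the coupling
    set π : Measure (EuclideanSpace ℝ (Fin d) × EuclideanSpace ℝ (Fin d)) :=
      (∑ i ∈ NN, ENNReal.ofReal (w i) • Measure.dirac (pts i, pts i)) +
        ∑ p ∈ NNᶜ ×ˢ NN, ENNReal.ofReal (w p.1 * (u p.2 / t)) •
          Measure.dirac (pts p.1, pts p.2) with hπ
    have hfst : π.map Prod.fst = discretePosterior pts a σ x := by
      rw [hπ, Measure.map_add _ _ measurable_fst, map_sum_smul_dirac _ _ _ measurable_fst,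
        map_sum_smul_dirac _ _ _ measurable_fst, hμ]
      have hinner : ∀ i, ∑ k ∈ NN, ENNReal.ofReal (w i * (u k / t)) • Measure.dirac (pts i)
          = ENNReal.ofReal (w i) • Measure.dirac (pts i) := by
        intro i
        rw [← Finset.sum_smul, ← ENNReal.ofReal_sum_of_nonneg
          (fun k hk => mul_nonneg (hw0 i).le (div_nonneg (hu0 k hk) ht0.le)),
          ← Finset.mul_sum, ← Finset.sum_div, husum, div_self ht0.ne', mul_one]
      calc (∑ i ∈ NN, ENNReal.ofReal (w i) • Measure.dirac (pts i)) +
            ∑ p ∈ NNᶜ ×ˢ NN, ENNReal.ofReal (w p.1 * (u p.2 / t)) • Measure.dirac (pts p.1)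
          = (∑ i ∈ NN, ENNReal.ofReal (w i) • Measure.dirac (pts i)) +
            ∑ i ∈ NNᶜ, ENNReal.ofReal (w i) • Measure.dirac (pts i) := by
            rw [Finset.sum_product]
            exact congrArg _ (Finset.sum_congr rfl fun i _ => hinner i)
        _ = ∑ i, ENNReal.ofReal (w i) • Measure.dirac (pts i) :=
            Finset.sum_add_sum_compl NN _
    have hsnd : π.map Prod.snd = nnMeasure pts a x := by
      rw [hπ, Measure.map_add _ _ measurable_snd, map_sum_smul_dirac _ _ _ measurable_snd,
        map_sum_smul_dirac _ _ _ measurable_snd, hν]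
      have hinner : ∀ k ∈ NN, ∑ i ∈ NNᶜ, ENNReal.ofReal (w i * (u k / t)) • Measure.dirac (pts k)
          = ENNReal.ofReal (u k) • Measure.dirac (pts k) := by
        intro k hk
        rw [← Finset.sum_smul, ← ENNReal.ofReal_sum_of_nonneg
          (fun i _ => mul_nonneg (hw0 i).le (div_nonneg (hu0 k hk) ht0.le)),
          ← Finset.sum_mul, ← ht]
        congr 2
        field_simp
      calc (∑ k ∈ NN, ENNReal.ofReal (w k) • Measure.dirac (pts k)) +
            ∑ p ∈ NNᶜ ×ˢ NN, ENNReal.ofReal (w p.1 * (u p.2 / t)) • Measure.dirac (pts p.2)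
          = (∑ k ∈ NN, ENNReal.ofReal (w k) • Measure.dirac (pts k)) +
            ∑ k ∈ NN, ENNReal.ofReal (u k) • Measure.dirac (pts k) := by
            rw [Finset.sum_product_right]
            exact congrArg _ (Finset.sum_congr rfl fun k hk => hinner k hk)
        _ = ∑ k ∈ NN, ENNReal.ofReal (v k) • Measure.dirac (pts k) := by
            rw [← Finset.sum_add_distrib]
            refine Finset.sum_congr rfl fun k hk => ?_
            rw [← add_smul, ← ENNReal.ofReal_add (hw0 k).le (hu0 k hk)]
            congr 1
            rw [hu]; ring
    -- cost bound
    have hdiam0 : (0:ℝ) ≤ diam (Set.range pts) := diam_nonneg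
    have hcost : eLpNorm (fun z : EuclideanSpace ℝ (Fin d) × EuclideanSpace ℝ (Fin d) => z.1 - z.2) 2 π ≤
        ENNReal.ofReal (diam (Set.range pts) * Real.sqrt t) := by
      rw [eLpNorm_eq_lintegral_rpow_enorm_toReal two_ne_zero ENNReal.ofNat_ne_top, hπ,
        lintegral_add_measure, lintegral_sum_smul_dirac, lintegral_sum_smul_dirac]
      have hfirst : ∑ i ∈ NN, ENNReal.ofReal (w i) *
          (‖(pts i, pts i).1 - (pts i, pts i).2‖₊ : ℝ≥0∞) ^ (2:ℝ≥0∞).toReal = 0 := by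
        simp
      erw [hfirst, zero_add]
      have hterm : ∀ p ∈ NNᶜ ×ˢ NN, ENNReal.ofReal (w p.1 * (u p.2 / t)) *
          (‖(pts p.1, pts p.2).1 - (pts p.1, pts p.2).2‖₊ : ℝ≥0∞) ^ (2:ℝ≥0∞).toReal ≤
          ENNReal.ofReal (w p.1 * (u p.2 / t)) *
            ENNReal.ofReal (diam (Set.range pts)) ^ (2:ℝ≥0∞).toReal := by
        intro p _
        refine mul_le_mul_right (ENNReal.rpow_le_rpow ?_ (by simp)) _
        have hd : ‖pts p.1 - pts p.2‖ ≤ diam (Set.range pts) := by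
          rw [← dist_eq_norm]
          exact dist_le_diam_of_mem ((Set.finite_range pts).isBounded) ⟨p.1, rfl⟩ ⟨p.2, rfl⟩
        calc (‖(pts p.1, pts p.2).1 - (pts p.1, pts p.2).2‖₊ : ℝ≥0∞)
            = ENNReal.ofReal ‖pts p.1 - pts p.2‖ := (ofReal_norm_eq_enorm _).symm
          _ ≤ ENNReal.ofReal (diam (Set.range pts)) := ENNReal.ofReal_le_ofReal hd
      calc (∑ p ∈ NNᶜ ×ˢ NN, ENNReal.ofReal (w p.1 * (u p.2 / t)) *
              (‖(pts p.1, pts p.2).1 - (pts p.1, pts p.2).2‖₊ : ℝ≥0∞) ^ (2:ℝ≥0∞).toReal)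
              ^ (1 / (2:ℝ≥0∞).toReal)
          ≤ (∑ p ∈ NNᶜ ×ˢ NN, ENNReal.ofReal (w p.1 * (u p.2 / t)) *
              ENNReal.ofReal (diam (Set.range pts)) ^ (2:ℝ≥0∞).toReal) ^ (1 / (2:ℝ≥0∞).toReal) :=
            ENNReal.rpow_le_rpow (Finset.sum_le_sum hterm) (by norm_num)
        _ = ((∑ p ∈ NNᶜ ×ˢ NN, ENNReal.ofReal (w p.1 * (u p.2 / t))) *
              ENNReal.ofReal (diam (Set.range pts)) ^ (2:ℝ≥0∞).toReal) ^ (1 / (2:ℝ≥0∞).toReal) := by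
            rw [← Finset.sum_mul]
        _ = (ENNReal.ofReal t * ENNReal.ofReal (diam (Set.range pts)) ^ (2:ℝ≥0∞).toReal)
              ^ (1 / (2:ℝ≥0∞).toReal) := by
            congr 1
            rw [← ENNReal.ofReal_sum_of_nonneg (fun p hp => mul_nonneg (hw0 p.1).le
              (div_nonneg (hu0 p.2 (Finset.mem_product.1 hp).2) ht0.le))]
            congr 1
            rw [Finset.sum_product]
            have hin : ∀ i ∈ NNᶜ, ∑ y ∈ NN, w (i, y).1 * (u (i, y).2 / t) = w i := by
              intro i _
              show ∑ y ∈ NN, w i * (u y / t) = w i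
              rw [← Finset.mul_sum, ← Finset.sum_div, husum, div_self ht0.ne', mul_one]
            rw [Finset.sum_congr rfl hin, ht]
        _ ≤ ENNReal.ofReal (diam (Set.range pts) * Real.sqrt t) := by
            have h2 : (2:ℝ≥0∞).toReal = (2:ℝ) := by simp
            rw [h2, ENNReal.mul_rpow_of_nonneg _ _ (by norm_num : (0:ℝ) ≤ 1/2),
              ← ENNReal.rpow_mul]
            have h21 : (2:ℝ) * (1/2) = 1 := by norm_num
            rw [h21, ENNReal.rpow_one,
              ENNReal.ofReal_rpow_of_nonneg ht0.le (by norm_num : (0:ℝ) ≤ 1/2),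
              ← Real.sqrt_eq_rpow, ← ENNReal.ofReal_mul (Real.sqrt_nonneg t)]
            exact ENNReal.ofReal_le_ofReal (le_of_eq (mul_comm _ _))
    -- the gap bound
    obtain ⟨j₀, hj₀⟩ := hNNc
    have hgt : ∀ j ∉ NN, d₁ < dist x (pts j) := by
      intro j hj
      rcases not_forall.1 ((hmemNN j).not.1 hj) with ⟨k, hk⟩
      exact lt_of_le_of_lt (hd₁le k) (lt_of_not_ge hk)
    have hex : ∃ i, firstDist pts x < dist x (pts i) :=
      ⟨j₀, hgt j₀ (Finset.mem_compl.1 hj₀)⟩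
    set d₂ : ℝ := sInf {r | (∃ i, dist x (pts i) = r) ∧ firstDist pts x < r} with hd₂def
    have hΔ : distGapSq pts x = d₂ ^ 2 - d₁ ^ 2 := by
      rw [distGapSq, if_pos hex]
    have hsetne : {r | (∃ i, dist x (pts i) = r) ∧ firstDist pts x < r}.Nonempty :=
      ⟨dist x (pts j₀), ⟨j₀, rfl⟩, hgt j₀ (Finset.mem_compl.1 hj₀)⟩
    have hsetbdd : BddBelow {r | (∃ i, dist x (pts i) = r) ∧ firstDist pts x < r} :=
      ⟨d₁, fun r hr => hr.2.le⟩
    have hd₂ge : d₁ ≤ d₂ := le_csInf hsetne fun r hr => hr.2.le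
    have hd₂le : ∀ j ∉ NN, d₂ ≤ dist x (pts j) := fun j hj =>
      csInf_le hsetbdd ⟨⟨j, rfl⟩, hgt j hj⟩
    have hσ2 : (0:ℝ) < 2 * σ ^ 2 := by positivity
    set Ex : ℝ := Real.exp (-distGapSq pts x / (2 * σ ^ 2)) with hEx
    have hej : ∀ j ∉ NN, e j ≤ e₁ * Ex := by
      intro j hj
      rw [he₁, hEx, ← Real.exp_add]
      simp only [he]
      rw [Real.exp_le_exp]
      have hsq : d₂ ^ 2 ≤ dist x (pts j) ^ 2 :=
        pow_le_pow_left₀ (le_trans hd₁0 hd₂ge) (hd₂le j hj) 2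
      rw [hΔ]
      have hneg : -dist x (pts j) ^ 2 ≤ -d₂ ^ 2 := neg_le_neg hsq
      calc -dist x (pts j) ^ 2 / (2 * σ ^ 2) ≤ -d₂ ^ 2 / (2 * σ ^ 2) := by gcongr
        _ = -d₁ ^ 2 / (2 * σ ^ 2) + -(d₂ ^ 2 - d₁ ^ 2) / (2 * σ ^ 2) := by ring
    have hasum : ∑ j ∈ NNᶜ, a j = 1 - P := by linarith [hP1]
    have ht2 : t ≤ (1 - P) / P * Ex := by
      have hnum : ∑ j ∈ NNᶜ, a j * e j ≤ (1 - P) * (e₁ * Ex) := by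
        calc ∑ j ∈ NNᶜ, a j * e j ≤ ∑ j ∈ NNᶜ, a j * (e₁ * Ex) :=
              Finset.sum_le_sum fun j hj => mul_le_mul_of_nonneg_left
                (hej j (Finset.mem_compl.1 hj)) (ha j).le
          _ = (1 - P) * (e₁ * Ex) := by rw [← Finset.sum_mul, hasum]
      have htval : t = (∑ j ∈ NNᶜ, a j * e j) / S := by
        rw [ht, Finset.sum_div]
      rw [htval]
      have he₁pos : 0 < e₁ := Real.exp_pos _
      have h1P : 0 ≤ 1 - P := by
        have : 0 < ∑ j ∈ NNᶜ, a j := Finset.sum_pos (fun j _ => ha j) ⟨j₀, hj₀⟩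
        linarith
      have hExpos : 0 < Ex := Real.exp_pos _
      calc (∑ j ∈ NNᶜ, a j * e j) / S ≤ ((1 - P) * (e₁ * Ex)) / (P * e₁) :=
            div_le_div₀ (mul_nonneg h1P (by positivity)) hnum (by positivity) hPe₁S
        _ = (1 - P) / P * Ex := by field_simp
    -- conclude
    refine le_trans (key π hfst hsnd) (le_trans hcost (ENNReal.ofReal_le_ofReal ?_))
    have hsqrt : Real.sqrt t ≤ Real.sqrt ((1 - P) / P) * Real.exp (-distGapSq pts x / (4 * σ ^ 2)) := by
      calc Real.sqrt t ≤ Real.sqrt ((1 - P) / P * Ex) := Real.sqrt_le_sqrt ht2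
        _ = Real.sqrt ((1 - P) / P) * Real.sqrt Ex := Real.sqrt_mul (by
            have : 0 < ∑ j ∈ NNᶜ, a j := Finset.sum_pos (fun j _ => ha j) ⟨j₀, hj₀⟩
            have h1P : 0 ≤ 1 - P := by linarith
            positivity) _
        _ = Real.sqrt ((1 - P) / P) * Real.exp (-distGapSq pts x / (4 * σ ^ 2)) := by
            rw [hEx, sqrt_exp']
            congr 1
            ring
    calc diam (Set.range pts) * Real.sqrt t
        ≤ diam (Set.range pts) *
          (Real.sqrt ((1 - P) / P) * Real.exp (-distGapSq pts x / (4 * σ ^ 2))) :=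
          mul_le_mul_of_nonneg_left hsqrt hdiam0
      _ = diam (Set.range pts) * Real.sqrt ((1 - P) / P) *
          Real.exp (-distGapSq pts x / (4 * σ ^ 2)) := by ring
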